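/- Constant-rate caching is optimal: given the optimal per-slot cached amounts q*_{nu}, define the constant-rate caching policy c*(t,u) = Σ_{n=1}^N (q*_{nu}/T_s)·1_{[(n−1)T_s, nT_s)}(t). Then A(t, c*) and B(t, c*) agree with the piecewise-linear interpolants Ā(t) and B̄(t) of the slot-transition values a_n = A(nT_s, c*) and b_n = B(nT_s, c*); consequently, any transmission policy feasible for the relaxed problem (constraints imposed only at slot transitions, with piecewise-linear departure curve) is also feasible for the original continuous-time problem under the policy c*. -/

import Mathlib

open MeasureTheory Set

/-!
On every slot the integrands defining `A` and `B` are constant, so both curves are affine on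
each slot and hence equal to the linear interpolants of their values at the slot boundaries.
A departure curve `D` that is affine on every slot then lies between `A` and `B` on a whole
slot as soon as it does at the slot's two ends, because a convex combination of inequalities
is again an inequality.
-/

noncomputable def slotStep {N : ℕ} (Ts : ℝ) (v : Fin N → ℝ) (t : ℝ) : ℝ :=
  ∑ n : Fin N, (Ico (((n : ℕ) : ℝ) * Ts) ((((n : ℕ) : ℝ) + 1) * Ts)).indicator (fun _ => v n) t

def InterpolatesOnSlots (N : ℕ) (Ts : ℝ) (F : ℝ → ℝ) : Prop :=
  ∀ n : ℕ, 1 ≤ n → n ≤ N → ∀ θ ∈ Icc (0:ℝ) 1,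
    F (((n : ℝ) - 1) * Ts + θ * Ts) = (1 - θ) * F (((n : ℝ) - 1) * Ts) + θ * F ((n : ℝ) * Ts)

section slotStep

variable {N : ℕ} (Ts : ℝ)

theorem slotStep_sub (v w : Fin N → ℝ) (t : ℝ) :
    slotStep Ts v t - slotStep Ts w t = slotStep Ts (fun n => v n - w n) t := by
  simp only [slotStep, ← Finset.sum_sub_distrib, indicator_apply]
  refine Finset.sum_congr rfl fun n _ => ?_
  split_ifs <;> simp

theorem sum_slotStep {ι : Type*} (s : Finset ι) (v : ι → Fin N → ℝ) (t : ℝ) :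
    ∑ i ∈ s, slotStep Ts (v i) t = slotStep Ts (fun n => ∑ i ∈ s, v i n) t := by
  simp only [slotStep, indicator_apply]
  rw [Finset.sum_comm]
  refine Finset.sum_congr rfl fun n _ => ?_
  split_ifs <;> simp

theorem slotStep_eq_of_mem (v : Fin N → ℝ) {k : Fin N} {t : ℝ}
    (ht : t ∈ Ico (((k : ℕ) : ℝ) * Ts) ((((k : ℕ) : ℝ) + 1) * Ts)) :
    slotStep Ts v t = v k := by
  have hTs : 0 < Ts := by nlinarith [ht.1, ht.2]
  refine (Finset.sum_eq_single k (fun m _ hmk => indicator_of_notMem ?_ _)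
    (by simp)).trans (indicator_of_mem ht _)
  rintro ⟨hm₁, hm₂⟩
  rcases lt_or_gt_of_ne (Fin.val_ne_of_ne hmk) with h | h
  · have : ((m : ℕ) : ℝ) + 1 ≤ (k : ℕ) := by exact_mod_cast h
    nlinarith [ht.1]
  · have : ((k : ℕ) : ℝ) + 1 ≤ (m : ℕ) := by exact_mod_cast h
    nlinarith [ht.2]

theorem intervalIntegrable_slotStep (v : Fin N → ℝ) (a b : ℝ) :
    IntervalIntegrable (slotStep Ts v) volume a b := by
  have : slotStep Ts v = ∑ n : Fin N,
      (Ico (((n : ℕ) : ℝ) * Ts) ((((n : ℕ) : ℝ) + 1) * Ts)).indicator (fun _ => v n) := by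
    funext t; simp [slotStep]
  rw [this]
  refine IntervalIntegrable.sum _ fun n _ => ?_
  rw [intervalIntegrable_iff]
  exact (integrableOn_const measure_Ioc_lt_top.ne).indicator measurableSet_Ico

end slotStep

theorem integral_zero_eq_add_mul_of_eqOn_Ioo {g : ℝ → ℝ} {a b c v : ℝ}
    (hg : EqOn g (fun _ => v) (Ioo a c)) (hint : IntervalIntegrable g volume 0 a)
    (hb : b ∈ Icc a c) :
    ∫ τ in (0:ℝ)..b, g τ = (∫ τ in (0:ℝ)..a, g τ) + (b - a) * v := by
  have hg' : EqOn g (fun _ => v) (Ioo a b) := hg.mono (Ioo_subset_Ioo_right hb.2)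
  have hint' : IntervalIntegrable g volume a b :=
    intervalIntegrable_const.congr_uIoo (uIoo_of_le hb.1 ▸ hg'.symm)
  rw [← intervalIntegral.integral_add_adjacent_intervals hint hint',
    intervalIntegral.integral_congr_Ioo_of_le hb.1 hg', intervalIntegral.integral_const,
    smul_eq_mul]

theorem integral_zero_interpolates_of_eqOn_Ioo {g : ℝ → ℝ} {a h v : ℝ} (hh : 0 ≤ h)
    (hg : EqOn g (fun _ => v) (Ioo a (a + h))) (hint : IntervalIntegrable g volume 0 a)
    {θ : ℝ} (hθ : θ ∈ Icc (0:ℝ) 1) :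
    ∫ τ in (0:ℝ)..(a + θ * h), g τ
      = (1 - θ) * (∫ τ in (0:ℝ)..a, g τ) + θ * ∫ τ in (0:ℝ)..(a + h), g τ := by
  have hθh : θ * h ≤ h := mul_le_of_le_one_left hh hθ.2
  rw [integral_zero_eq_add_mul_of_eqOn_Ioo hg hint ⟨by nlinarith [hθ.1], by linarith⟩,
    integral_zero_eq_add_mul_of_eqOn_Ioo hg hint ⟨by linarith, le_rfl⟩]
  ring

theorem interpolatesOnSlots_integral_slotStep {N : ℕ} {Ts : ℝ} (hTs : 0 < Ts)
    (v : Fin N → ℝ) :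
    InterpolatesOnSlots N Ts (fun t => ∫ τ in (0:ℝ)..t, slotStep Ts v τ) := by
  intro n hn₁ hnN θ hθ
  have hk : ((n - 1 : ℕ) : ℝ) = (n : ℝ) - 1 := by rw [Nat.cast_sub hn₁, Nat.cast_one]
  have hslot : EqOn (slotStep Ts v) (fun _ => v ⟨n - 1, by omega⟩)
      (Ioo (((n : ℝ) - 1) * Ts) (((n : ℝ) - 1) * Ts + Ts)) := fun t ht =>
    slotStep_eq_of_mem Ts v (k := ⟨n - 1, by omega⟩)
      ⟨by rw [hk]; exact ht.1.le, by rw [hk]; linarith [ht.2]⟩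
  have := integral_zero_interpolates_of_eqOn_Ioo hTs.le hslot
    (intervalIntegrable_slotStep Ts v _ _) hθ
  simpa only [show ((n : ℝ) - 1) * Ts + Ts = n * Ts by ring] using this

theorem exists_slot_of_mem_Ioc {N : ℕ} {Ts t : ℝ} (hTs : 0 < Ts) (ht : t ∈ Ioc 0 (N * Ts)) :
    ∃ n : ℕ, 1 ≤ n ∧ n ≤ N ∧ ∃ θ ∈ Icc (0:ℝ) 1, t = ((n : ℝ) - 1) * Ts + θ * Ts := by
  have htTs : 0 < t / Ts := div_pos ht.1 hTs
  refine ⟨⌈t / Ts⌉₊, Nat.one_le_iff_ne_zero.mpr (Nat.ceil_pos.mpr htTs).ne',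
    Nat.ceil_le.mpr ((div_le_iff₀ hTs).mpr ht.2), (t / Ts - (⌈t / Ts⌉₊ - 1)), ⟨?_, ?_⟩, ?_⟩
  · linarith [Nat.ceil_lt_add_one htTs.le]
  · linarith [Nat.le_ceil (t / Ts)]
  · field_simp; ring

namespace InterpolatesOnSlots

variable {N : ℕ} {Ts : ℝ}

theorem sum {ι : Type*} (s : Finset ι) {F : ι → ℝ → ℝ}
    (hF : ∀ i ∈ s, InterpolatesOnSlots N Ts (F i)) :
    InterpolatesOnSlots N Ts (fun t => ∑ i ∈ s, F i t) := by
  intro n hn₁ hnN θ hθ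
  simp only [Finset.sum_congr rfl fun i hi => hF i hi n hn₁ hnN θ hθ, Finset.sum_add_distrib,
    Finset.mul_sum]

theorem const_add {F : ℝ → ℝ} (hF : InterpolatesOnSlots N Ts F) (c : ℝ) :
    InterpolatesOnSlots N Ts (fun t => c + F t) := by
  intro n hn₁ hnN θ hθ
  simp only [hF n hn₁ hnN θ hθ]
  ring

theorem le_of_le_on_grid {F G : ℝ → ℝ} (hTs : 0 < Ts) (hF : InterpolatesOnSlots N Ts F)
    (hG : InterpolatesOnSlots N Ts G) (hgrid : ∀ n : ℕ, n ≤ N → F (n * Ts) ≤ G (n * Ts))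
    {t : ℝ} (ht : t ∈ Icc 0 (N * Ts)) : F t ≤ G t := by
  rcases ht.1.eq_or_lt with rfl | ht₀
  · simpa using hgrid 0 N.zero_le
  obtain ⟨n, hn₁, hnN, θ, hθ, rfl⟩ := exists_slot_of_mem_Ioc hTs ⟨ht₀, ht.2⟩
  have hprev := hgrid (n - 1) (by omega)
  rw [Nat.cast_sub hn₁, Nat.cast_one] at hprev
  rw [hF n hn₁ hnN θ hθ, hG n hn₁ hnN θ hθ]
  have : 0 ≤ 1 - θ := sub_nonneg.mpr hθ.2
  gcongr
  exacts [hθ.1, hgrid n hnN]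

end InterpolatesOnSlots

theorem constant_rate_caching_optimal_general
    (N U : ℕ) (Ts C : ℝ) (hTs : 0 < Ts)
    (s q : Fin N → Fin U → ℝ)
    (ρ : Fin N → Fin U → Option (Fin N × Fin U)) :
    let sFun : Fin U → ℝ → ℝ := fun u t =>
      ∑ n : Fin N, (Set.Ico (((n : ℕ) : ℝ) * Ts) ((((n : ℕ) : ℝ) + 1) * Ts)).indicator
        (fun _ => s n u) t
    let cStar : Fin U → ℝ → ℝ := fun u t =>
      ∑ n : Fin N, (Set.Ico (((n : ℕ) : ℝ) * Ts) ((((n : ℕ) : ℝ) + 1) * Ts)).indicator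
        (fun _ => q n u / Ts) t
    let cRho : Fin U → ℝ → ℝ := fun u t =>
      ∑ n : Fin N, (Set.Ico (((n : ℕ) : ℝ) * Ts) ((((n : ℕ) : ℝ) + 1) * Ts)).indicator
        (fun _ => (ρ n u).elim 0 (fun p => q p.1 p.2) / Ts) t
    let A : ℝ → ℝ := fun t => ∑ u : Fin U, ∫ τ in (0:ℝ)..t, (sFun u τ - cRho u τ)
    let B : ℝ → ℝ := fun t => C + ∫ τ in (0:ℝ)..t, ∑ u : Fin U, (sFun u τ - cStar u τ)
    -- A and B coincide with the piecewise-linear interpolants of their grid values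
    (∀ n : ℕ, 1 ≤ n → n ≤ N → ∀ θ ∈ Set.Icc (0:ℝ) 1,
      A (((n : ℝ) - 1) * Ts + θ * Ts)
          = (1 - θ) * A (((n : ℝ) - 1) * Ts) + θ * A ((n : ℝ) * Ts)
      ∧ B (((n : ℝ) - 1) * Ts + θ * Ts)
          = (1 - θ) * B (((n : ℝ) - 1) * Ts) + θ * B ((n : ℝ) * Ts))
    -- feasibility transfer from the relaxed (slot-transition) problem
    ∧ (∀ D : ℝ → ℝ,
        (∀ n : ℕ, n ≤ N → A ((n : ℝ) * Ts) ≤ D ((n : ℝ) * Ts)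
            ∧ D ((n : ℝ) * Ts) ≤ B ((n : ℝ) * Ts)) →
        (∀ n : ℕ, 1 ≤ n → n ≤ N → ∀ θ ∈ Set.Icc (0:ℝ) 1,
          D (((n : ℝ) - 1) * Ts + θ * Ts)
            = (1 - θ) * D (((n : ℝ) - 1) * Ts) + θ * D ((n : ℝ) * Ts)) →
        ∀ t ∈ Set.Icc (0:ℝ) ((N : ℝ) * Ts), A t ≤ D t ∧ D t ≤ B t) := by
  intro sFun cStar cRho A B
  have hA : InterpolatesOnSlots N Ts A := by
    show InterpolatesOnSlots N Ts fun t => ∑ u, ∫ τ in (0:ℝ)..t,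
      (slotStep Ts (s · u) τ - slotStep Ts (fun n => (ρ n u).elim 0 (fun p => q p.1 p.2) / Ts) τ)
    simp only [slotStep_sub]
    exact .sum Finset.univ fun u _ => interpolatesOnSlots_integral_slotStep hTs _
  have hB : InterpolatesOnSlots N Ts B := by
    show InterpolatesOnSlots N Ts fun t => C + ∫ τ in (0:ℝ)..t,
      ∑ u, (slotStep Ts (s · u) τ - slotStep Ts (q · u / Ts) τ)
    simp only [slotStep_sub, sum_slotStep]
    exact (interpolatesOnSlots_integral_slotStep hTs _).const_add C
  refine ⟨fun n hn₁ hnN θ hθ => ⟨hA n hn₁ hnN θ hθ, hB n hn₁ hnN θ hθ⟩,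
    fun D hgrid hD t ht => ⟨hA.le_of_le_on_grid hTs hD (fun n hn => (hgrid n hn).1) ht,
      InterpolatesOnSlots.le_of_le_on_grid hTs hD hB (fun n hn => (hgrid n hn).2) ht⟩⟩

/-- Constant-rate caching is optimal: with the piecewise-constant caching policy
`c*(t,u) = q*ₙᵤ/Tₛ` on slot `n`, the curves `A(·,c*)` and `B(·,c*)` are the
piecewise-linear interpolants of their slot-transition values; consequently any
nondecreasing, slot-wise linear departure curve satisfying the constraints at slot
transitions is feasible for the continuous-time problem under `c*`. -/
theorem constant_rate_caching_optimal
    (N U : ℕ) (Ts C : ℝ) (hTs : 0 < Ts) (hC : 0 ≤ C)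
    (s q : Fin N → Fin U → ℝ)
    (hs : ∀ n u, 0 ≤ s n u) (hq : ∀ n u, 0 ≤ q n u ∧ q n u ≤ Ts * s n u)
    (ρ : Fin N → Fin U → Option (Fin N × Fin U)) :
    let sFun : Fin U → ℝ → ℝ := fun u t =>
      ∑ n : Fin N, (Set.Ico (((n : ℕ) : ℝ) * Ts) ((((n : ℕ) : ℝ) + 1) * Ts)).indicator
        (fun _ => s n u) t
    let cStar : Fin U → ℝ → ℝ := fun u t =>
      ∑ n : Fin N, (Set.Ico (((n : ℕ) : ℝ) * Ts) ((((n : ℕ) : ℝ) + 1) * Ts)).indicator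
        (fun _ => q n u / Ts) t
    let cRho : Fin U → ℝ → ℝ := fun u t =>
      ∑ n : Fin N, (Set.Ico (((n : ℕ) : ℝ) * Ts) ((((n : ℕ) : ℝ) + 1) * Ts)).indicator
        (fun _ => (ρ n u).elim 0 (fun p => q p.1 p.2) / Ts) t
    let A : ℝ → ℝ := fun t => ∑ u : Fin U, ∫ τ in (0:ℝ)..t, (sFun u τ - cRho u τ)
    let B : ℝ → ℝ := fun t => C + ∫ τ in (0:ℝ)..t, ∑ u : Fin U, (sFun u τ - cStar u τ)
    -- A and B coincide with the piecewise-linear interpolants of their grid values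
    (∀ n : ℕ, 1 ≤ n → n ≤ N → ∀ θ ∈ Set.Icc (0:ℝ) 1,
      A (((n : ℝ) - 1) * Ts + θ * Ts)
          = (1 - θ) * A (((n : ℝ) - 1) * Ts) + θ * A ((n : ℝ) * Ts)
      ∧ B (((n : ℝ) - 1) * Ts + θ * Ts)
          = (1 - θ) * B (((n : ℝ) - 1) * Ts) + θ * B ((n : ℝ) * Ts))
    -- feasibility transfer from the relaxed (slot-transition) problem
    ∧ (∀ D : ℝ → ℝ,
        (∀ n : ℕ, n ≤ N → A ((n : ℝ) * Ts) ≤ D ((n : ℝ) * Ts)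
            ∧ D ((n : ℝ) * Ts) ≤ B ((n : ℝ) * Ts)) →
        (∀ n : ℕ, 1 ≤ n → n ≤ N → ∀ θ ∈ Set.Icc (0:ℝ) 1,
          D (((n : ℝ) - 1) * Ts + θ * Ts)
            = (1 - θ) * D (((n : ℝ) - 1) * Ts) + θ * D ((n : ℝ) * Ts)) →
        ∀ t ∈ Set.Icc (0:ℝ) ((N : ℝ) * Ts), A t ≤ D t ∧ D t ≤ B t) :=
  constant_rate_caching_optimal_general N U Ts C hTs s q ρ
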